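/- arXiv:2107.02430 — 3 statements merged into one kernel-verified Lean document; each statement's English description precedes it below -/
import Mathlib

section
/- The SEIR metapopulation model with infection during travel has a unique disease-free equilibrium P⁰ = (S⁰_1, 0, 0, 0, …, S⁰_n, 0, 0, 0) ∈ ℝ₊^{4n}: precisely, the matrix ψ^S = diag(μ_i + Σ_{j=1}^n m_{ji}) − M (where M = (m_{ij})) is invertible, the vector S⁰ = (ψ^S)^{-1} Π has all entries strictly positive, the point (S⁰, 0, 0, 0) is an equilibrium of the system, and it is the only equilibrium with E_i = 0 and I_i = 0 for all i (in particular the only equilibrium solution of ψ^S S = Π, ψ^R R = 0 is S = S⁰, R = 0). -/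
set_option linter.unusedVariables false

open Finset Matrix Filter Topology

/-- The `S`-component of the vector field of the SEIR metapopulation model with
infection during travel, evaluated at the state `(S, E, I, R)`. -/
noncomputable def vfS (n : ℕ) (Λ β μ γ σ δ α ξ p : Fin n → ℝ)
    (m : Fin n → Fin n → ℝ) (S E I R : Fin n → ℝ) (i : Fin n) : ℝ :=
  Λ i - β i * S i * I i / (S i + E i + I i + R i) - μ i * S i
    - (∑ j, m j i) * S i
    + ∑ j, m i j * (1 - α j * I j / (S j + E j + I j + R j)) * S j

/-- The `E`-component of the vector field. -/
noncomputable def vfE (n : ℕ) (Λ β μ γ σ δ α ξ p : Fin n → ℝ)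
    (m : Fin n → Fin n → ℝ) (S E I R : Fin n → ℝ) (i : Fin n) : ℝ :=
  β i * S i * I i / (S i + E i + I i + R i) - (γ i + μ i) * E i
    - (∑ j, m j i) * E i
    + ∑ j, m i j * (α j * I j / (S j + E j + I j + R j)) * S j
    + ∑ j, (1 - ξ i) * m i j * E j

/-- The `I`-component of the vector field. -/
noncomputable def vfI (n : ℕ) (Λ β μ γ σ δ α ξ p : Fin n → ℝ)
    (m : Fin n → Fin n → ℝ) (S E I R : Fin n → ℝ) (i : Fin n) : ℝ :=
  γ i * E i - (σ i + μ i + δ i) * I i - (∑ j, m j i) * I i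
    + ∑ j, ξ i * m i j * E j + ∑ j, (1 - p i) * m i j * I j

/-- The `R`-component of the vector field. -/
noncomputable def vfR (n : ℕ) (Λ β μ γ σ δ α ξ p : Fin n → ℝ)
    (m : Fin n → Fin n → ℝ) (S E I R : Fin n → ℝ) (i : Fin n) : ℝ :=
  σ i * I i - μ i * R i - (∑ j, m j i) * R i
    + ∑ j, m i j * R j + ∑ j, p i * m i j * I j

/-- The matrix `ψ^S = ψ^R = diag(μ_i + ∑_j m_{ji}) − M`, where `M = (m_{ij})`. -/
noncomputable def psiS (n : ℕ) (μ : Fin n → ℝ) (m : Fin n → Fin n → ℝ) :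
    Matrix (Fin n) (Fin n) ℝ :=
  Matrix.diagonal (fun i => μ i + ∑ j, m j i) - Matrix.of m

/-!
`ψ^S` is a Z-matrix whose positive diagonal strictly dominates each column, so it is
invertible by Gershgorin's theorem. It is moreover inverse-nonnegative: summing `(ψ^S S)_i`
over the set `N` where `S` is negative, the migration terms within `N` cancel and those
between `N` and its complement can only lower the sum, leaving at most `∑_{i ∈ N} μ_i S_i < 0`.
On the disease-free set `E = I = 0` the vector field reduces to `(Π − ψ^S S, 0, 0, −ψ^R R)`,
so its equilibria there are exactly the solutions of `ψ^S S = Π`, `ψ^R R = 0`.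
-/

section PsiS

variable {n : ℕ} {μ : Fin n → ℝ} {m : Fin n → Fin n → ℝ}

theorem psiS_mulVec_apply (S : Fin n → ℝ) (i : Fin n) :
    (psiS n μ m *ᵥ S) i = (μ i + ∑ j, m j i) * S i - ∑ j, m i j * S j := by
  simp only [psiS, sub_mulVec, mulVec_diagonal, Pi.sub_apply]
  rfl

theorem psiS_det_ne_zero (hμ : ∀ i, 0 < μ i) (hm : ∀ i j, 0 ≤ m i j) :
    (psiS n μ m).det ≠ 0 := by
  refine det_ne_zero_of_sum_col_lt_diag fun k => ?_
  have hoff : ∀ i ∈ univ.erase k, ‖psiS n μ m i k‖ = m i k := fun i hi => by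
    simp [psiS, (mem_erase.1 hi).1, abs_of_nonneg (hm i k)]
  have hdiag : psiS n μ m k k = μ k + ∑ i ∈ univ.erase k, m i k := by
    simp only [psiS, Matrix.sub_apply, diagonal_apply_eq, of_apply]
    rw [← add_sum_erase univ _ (mem_univ k)]
    ring
  have hcol : 0 ≤ ∑ i ∈ univ.erase k, m i k := sum_nonneg fun i _ => hm i k
  rw [sum_congr rfl hoff, hdiag, Real.norm_of_nonneg (by linarith [hμ k])]
  linarith [hμ k]

theorem isUnit_psiS (hμ : ∀ i, 0 < μ i) (hm : ∀ i j, 0 ≤ m i j) : IsUnit (psiS n μ m) :=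
  (isUnit_iff_isUnit_det _).2 (psiS_det_ne_zero hμ hm).isUnit

theorem nonneg_of_psiS_mulVec_nonneg (hμ : ∀ i, 0 < μ i) (hm : ∀ i j, 0 ≤ m i j)
    {S : Fin n → ℝ} (hS : ∀ i, 0 ≤ (psiS n μ m *ᵥ S) i) (i : Fin n) : 0 ≤ S i := by
  by_contra! hi
  set N := univ.filter fun i => S i < 0
  have hN : ∀ {i}, i ∈ N ↔ S i < 0 := by simp [N]
  have hout : ∀ i ∈ N, (∑ j, m j i) * S i ≤ ∑ j ∈ N, m j i * S i := fun i hi => by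
    rw [← sum_mul]
    exact mul_le_mul_of_nonpos_right
      (sum_le_sum_of_subset_of_nonneg (subset_univ N) fun j _ _ => hm j i) (hN.1 hi).le
  have hin : ∀ i ∈ N, ∑ j ∈ N, m i j * S j ≤ ∑ j, m i j * S j := fun i _ =>
    sum_le_sum_of_subset_of_nonneg (subset_univ N) fun j _ hj =>
      mul_nonneg (hm i j) (not_lt.1 (mt hN.2 hj))
  have key : ∑ i ∈ N, (psiS n μ m *ᵥ S) i ≤ ∑ i ∈ N, μ i * S i :=
    calc ∑ i ∈ N, (psiS n μ m *ᵥ S) i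
        = ∑ i ∈ N, μ i * S i
          + (∑ i ∈ N, (∑ j, m j i) * S i - ∑ i ∈ N, ∑ j, m i j * S j) := by
          simp only [psiS_mulVec_apply, add_mul, sum_sub_distrib, sum_add_distrib]; ring
      _ ≤ ∑ i ∈ N, μ i * S i
          + (∑ i ∈ N, ∑ j ∈ N, m j i * S i - ∑ i ∈ N, ∑ j ∈ N, m i j * S j) := by
          linarith [sum_le_sum hout, sum_le_sum hin]
      _ = ∑ i ∈ N, μ i * S i := by rw [sum_comm (s := N) (t := N)]; ring
  have hneg : ∑ i ∈ N, μ i * S i < 0 :=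
    sum_neg (fun j hj => mul_neg_of_pos_of_neg (hμ j) (hN.1 hj)) ⟨i, hN.2 hi⟩
  linarith [sum_nonneg fun i (_ : i ∈ N) => hS i]

theorem pos_of_psiS_mulVec_pos (hμ : ∀ i, 0 < μ i) (hm : ∀ i j, 0 ≤ m i j)
    {S : Fin n → ℝ} (hS : ∀ i, 0 < (psiS n μ m *ᵥ S) i) (i : Fin n) : 0 < S i := by
  have hnonneg := nonneg_of_psiS_mulVec_nonneg hμ hm fun i => (hS i).le
  have hinflow : 0 ≤ ∑ j, m i j * S j := sum_nonneg fun j _ => mul_nonneg (hm i j) (hnonneg j)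
  have hcoef : 0 < μ i + ∑ j, m j i := by
    linarith [hμ i, sum_nonneg fun j (_ : j ∈ univ) => hm j i]
  have := hS i
  rw [psiS_mulVec_apply] at this
  exact pos_of_mul_pos_right (by linarith) hcoef.le

end PsiS

section DiseaseFree

variable {n : ℕ} {Λ β μ γ σ δ α ξ p : Fin n → ℝ} {m : Fin n → Fin n → ℝ}
  (S R : Fin n → ℝ) (i : Fin n)

theorem vfS_disease_free :
    vfS n Λ β μ γ σ δ α ξ p m S 0 0 R i = Λ i - (psiS n μ m *ᵥ S) i := by
  simp only [vfS, psiS_mulVec_apply, Pi.zero_apply]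
  ring_nf

theorem vfE_disease_free : vfE n Λ β μ γ σ δ α ξ p m S 0 0 R i = 0 := by
  simp [vfE]

theorem vfI_disease_free : vfI n Λ β μ γ σ δ α ξ p m S 0 0 R i = 0 := by
  simp [vfI]

theorem vfR_disease_free : vfR n Λ β μ γ σ δ α ξ p m S 0 0 R i = -(psiS n μ m *ᵥ R) i := by
  simp only [vfR, psiS_mulVec_apply, Pi.zero_apply, mul_zero, sum_const_zero]
  ring

end DiseaseFree

theorem disease_free_equilibrium_exists_unique_general
    (n : ℕ)
    (Λ β μ γ σ δ α ξ p : Fin n → ℝ) (m : Fin n → Fin n → ℝ)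
    (hΛ : ∀ i, 0 < Λ i) (hμ : ∀ i, 0 < μ i)
    (hm : ∀ i j, 0 ≤ m i j) :
    -- ψ^S is invertible
    IsUnit (psiS n μ m) ∧
    -- S⁰ = (ψ^S)⁻¹ Π has strictly positive entries
    (∀ i, 0 < ((psiS n μ m)⁻¹ *ᵥ Λ) i) ∧
    -- P⁰ = (S⁰, 0, 0, 0) is an equilibrium of the system
    (∀ i, vfS n Λ β μ γ σ δ α ξ p m ((psiS n μ m)⁻¹ *ᵥ Λ) 0 0 0 i = 0 ∧
          vfE n Λ β μ γ σ δ α ξ p m ((psiS n μ m)⁻¹ *ᵥ Λ) 0 0 0 i = 0 ∧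
          vfI n Λ β μ γ σ δ α ξ p m ((psiS n μ m)⁻¹ *ᵥ Λ) 0 0 0 i = 0 ∧
          vfR n Λ β μ γ σ δ α ξ p m ((psiS n μ m)⁻¹ *ᵥ Λ) 0 0 0 i = 0) ∧
    -- P⁰ is the unique equilibrium with all E_i = I_i = 0
    (∀ S R : Fin n → ℝ,
      ((∀ i, vfS n Λ β μ γ σ δ α ξ p m S 0 0 R i = 0) ∧
       (∀ i, vfE n Λ β μ γ σ δ α ξ p m S 0 0 R i = 0) ∧
       (∀ i, vfI n Λ β μ γ σ δ α ξ p m S 0 0 R i = 0) ∧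
       (∀ i, vfR n Λ β μ γ σ δ α ξ p m S 0 0 R i = 0)) →
      S = (psiS n μ m)⁻¹ *ᵥ Λ ∧ R = 0) ∧
    -- in particular, the only solution of ψ^S S = Π and ψ^R R = 0 is S = S⁰, R = 0
    (∀ S R : Fin n → ℝ, psiS n μ m *ᵥ S = Λ → psiS n μ m *ᵥ R = 0 →
      S = (psiS n μ m)⁻¹ *ᵥ Λ ∧ R = 0) := by
  have hU := isUnit_psiS hμ hm
  have hinj := mulVec_injective_iff_isUnit.2 hU
  have hS₀ : psiS n μ m *ᵥ ((psiS n μ m)⁻¹ *ᵥ Λ) = Λ := by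
    rw [mulVec_mulVec, mul_nonsing_inv _ ((isUnit_iff_isUnit_det _).1 hU), one_mulVec]
  have hsolve : ∀ S R : Fin n → ℝ, psiS n μ m *ᵥ S = Λ → psiS n μ m *ᵥ R = 0 →
      S = (psiS n μ m)⁻¹ *ᵥ Λ ∧ R = 0 := fun S R hS hR =>
    ⟨hinj (hS.trans hS₀.symm), hinj (hR.trans (mulVec_zero _).symm)⟩
  refine ⟨hU, pos_of_psiS_mulVec_pos hμ hm (by simpa [hS₀] using hΛ), fun i => ?_, ?_, hsolve⟩
  · simp [vfS_disease_free, hS₀, vfE_disease_free, vfI_disease_free, vfR_disease_free]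
  · rintro S R ⟨hS, -, -, hR⟩
    refine hsolve S R (funext fun i => ?_) (funext fun i => ?_)
    · linarith [vfS_disease_free S R i ▸ hS i]
    · simpa [vfR_disease_free] using hR i

/-- **Existence and uniqueness of the disease-free equilibrium.**
The matrix `ψ^S` is invertible, `S⁰ = (ψ^S)⁻¹ Π` is entrywise positive, the point
`P⁰ = (S⁰, 0, 0, 0)` is an equilibrium of the SEIR metapopulation model with
infection during travel, and it is the only equilibrium with all `E_i = I_i = 0`;
in particular the only solution of `ψ^S S = Π`, `ψ^R R = 0` is `S = S⁰`, `R = 0`. -/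
theorem disease_free_equilibrium_exists_unique
    (n : ℕ) [NeZero n]
    (Λ β μ γ σ δ α ξ p : Fin n → ℝ) (m : Fin n → Fin n → ℝ)
    (hΛ : ∀ i, 0 < Λ i) (hβ : ∀ i, 0 ≤ β i) (hμ : ∀ i, 0 < μ i)
    (hγ : ∀ i, 0 ≤ γ i) (hσ : ∀ i, 0 ≤ σ i) (hδ : ∀ i, 0 ≤ δ i)
    (hα : ∀ i, α i ∈ Set.Icc (0 : ℝ) 1) (hξ : ∀ i, ξ i ∈ Set.Icc (0 : ℝ) 1)
    (hp : ∀ i, p i ∈ Set.Icc (0 : ℝ) 1)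
    (hm : ∀ i j, 0 ≤ m i j) (hmd : ∀ i, m i i = 0) :
    -- ψ^S is invertible
    IsUnit (psiS n μ m) ∧
    -- S⁰ = (ψ^S)⁻¹ Π has strictly positive entries
    (∀ i, 0 < ((psiS n μ m)⁻¹ *ᵥ Λ) i) ∧
    -- P⁰ = (S⁰, 0, 0, 0) is an equilibrium of the system
    (∀ i, vfS n Λ β μ γ σ δ α ξ p m ((psiS n μ m)⁻¹ *ᵥ Λ) 0 0 0 i = 0 ∧
          vfE n Λ β μ γ σ δ α ξ p m ((psiS n μ m)⁻¹ *ᵥ Λ) 0 0 0 i = 0 ∧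
          vfI n Λ β μ γ σ δ α ξ p m ((psiS n μ m)⁻¹ *ᵥ Λ) 0 0 0 i = 0 ∧
          vfR n Λ β μ γ σ δ α ξ p m ((psiS n μ m)⁻¹ *ᵥ Λ) 0 0 0 i = 0) ∧
    -- P⁰ is the unique equilibrium with all E_i = I_i = 0
    (∀ S R : Fin n → ℝ,
      ((∀ i, vfS n Λ β μ γ σ δ α ξ p m S 0 0 R i = 0) ∧
       (∀ i, vfE n Λ β μ γ σ δ α ξ p m S 0 0 R i = 0) ∧
       (∀ i, vfI n Λ β μ γ σ δ α ξ p m S 0 0 R i = 0) ∧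
       (∀ i, vfR n Λ β μ γ σ δ α ξ p m S 0 0 R i = 0)) →
      S = (psiS n μ m)⁻¹ *ᵥ Λ ∧ R = 0) ∧
    -- in particular, the only solution of ψ^S S = Π and ψ^R R = 0 is S = S⁰, R = 0
    (∀ S R : Fin n → ℝ, psiS n μ m *ᵥ S = Λ → psiS n μ m *ᵥ R = 0 →
      S = (psiS n μ m)⁻¹ *ᵥ Λ ∧ R = 0) :=
  disease_free_equilibrium_exists_unique_general n Λ β μ γ σ δ α ξ p m hΛ hμ hm
end

section
/- Suppose exposed and infectious individuals do not travel and the patch-level rates are homogeneous: let c = γ + μ > 0 and d = σ + μ + δ > 0, let F₁₁ = diag(β_1, …, β_n) with β_i ≥ 0, V₂₁ = diag(γ_1, …, γ_n) with γ_i ≥ 0, V₁₁ = c·I_n, and let V₂₂ be an n × n matrix with nonpositive off-diagonal entries which is invertible with entrywise nonnegative inverse and all of whose column sums equal d. Then the basic reproduction number R₀ = ρ(F₁₁ V₂₂^{-1} V₂₁ V₁₁^{-1}) satisfies min_{1≤i≤n} (β_i γ_i)/(c·d) ≤ R₀ ≤ max_{1≤i≤n} (β_i γ_i)/(c·d); equivalently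 min_i R₀^{(i)} ≤ R₀ ≤ max_i R₀^{(i)} with R₀^{(i)} = β_i γ_i / ((γ+μ)(σ+μ+δ)). -/
open Finset Matrix
open scoped ENNReal NNReal

/-! After moving `diag β` to the back (a cyclic permutation) and transposing, the next-generation
matrix has the spectral radius of `B = diag(β γ / c) (V₂₂⁻¹)ᵀ`. This matrix is nonnegative, and its
`i`-th row sum is `β_i γ_i / (c d)` because every column of `V₂₂⁻¹` sums to `1 / d`. The spectral
radius of a nonnegative matrix lies between its extreme row sums: it is at most the `ℓ∞` operator
norm, and by Gelfand's formula at least `m` whenever all row sums of `B` are `≥ m`, since then all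
row sums of `B ^ k` are `≥ m ^ k`. -/

namespace spectrum

theorem spectralRadius_mul_comm {𝕜 A : Type*} [NormedField 𝕜] [Ring A] [Algebra 𝕜 A]
    (a b : A) : spectralRadius 𝕜 (a * b) = spectralRadius 𝕜 (b * a) := by
  have hle (x y : A) : spectralRadius 𝕜 (x * y) ≤ spectralRadius 𝕜 (y * x) := by
    refine iSup₂_le fun k hk => ?_
    rcases eq_or_ne k 0 with rfl | hk0
    · simp
    · have hk' : k ∈ spectrum 𝕜 (y * x) \ {0} := by
        rw [← nonzero_mul_comm]
        exact ⟨hk, hk0⟩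
      exact le_iSup₂ (f := fun k (_ : k ∈ spectrum 𝕜 (y * x)) => (‖k‖₊ : ℝ≥0∞)) k hk'.1
  exact (hle a b).antisymm (hle b a)

theorem ofReal_le_spectralRadius_of_pow_le_norm {A : Type*} [NormedRing A] [NormedAlgebra ℂ A]
    [CompleteSpace A] {a : A} {r : ℝ} (hr : 0 ≤ r) (h : ∀ k : ℕ, r ^ k ≤ ‖a ^ k‖) :
    ENNReal.ofReal r ≤ spectralRadius ℂ a := by
  refine ge_of_tendsto (pow_norm_pow_one_div_tendsto_nhds_spectralRadius a) ?_
  filter_upwards [Filter.eventually_ne_atTop 0] with k hk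
  refine ENNReal.ofReal_le_ofReal ?_
  calc r = (r ^ k) ^ (1 / k : ℝ) := by rw [one_div, Real.pow_rpow_inv_natCast hr hk]
    _ ≤ ‖a ^ k‖ ^ (1 / k : ℝ) := Real.rpow_le_rpow (pow_nonneg hr k) (h k) (by positivity)

end spectrum

namespace Matrix

theorem spectrum_transpose {n R : Type*} [Fintype n] [DecidableEq n] [CommRing R]
    (M : Matrix n n R) : spectrum R Mᵀ = spectrum R M := by
  ext r
  simp only [spectrum.mem_iff, isUnit_iff_isUnit_det, Algebra.algebraMap_eq_smul_one]
  rw [← det_transpose, transpose_sub, transpose_smul, transpose_one, transpose_transpose]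

theorem spectralRadius_transpose {n 𝕜 : Type*} [Fintype n] [DecidableEq n] [NormedField 𝕜]
    (M : Matrix n n 𝕜) : spectralRadius 𝕜 Mᵀ = spectralRadius 𝕜 M := by
  rw [spectralRadius, spectralRadius, spectrum_transpose]

theorem sum_inv_apply_eq_inv {n K : Type*} [Fintype n] [DecidableEq n] [Field K]
    {V : Matrix n n K} (hV : IsUnit V) {d : K} (h : ∀ j, ∑ i, V i j = d) (j : n) :
    ∑ i, V⁻¹ i j = d⁻¹ := by
  refine eq_inv_of_mul_eq_one_right ?_
  calc d * ∑ i, V⁻¹ i j = ∑ k, (∑ i, V i k) * V⁻¹ k j := by simp only [h, mul_sum]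
    _ = ∑ i, (V * V⁻¹) i j := by
        simp only [mul_apply, sum_mul]
        exact sum_comm
    _ = 1 := by simp [mul_nonsing_inv V ((isUnit_iff_isUnit_det V).1 hV), one_apply]

theorem pow_le_sum_pow_apply {n R : Type*} [Fintype n] [DecidableEq n] [Semiring R]
    [PartialOrder R] [IsOrderedRing R] {A : Matrix n n R} (hA : ∀ i j, 0 ≤ A i j) {m : R}
    (hm : 0 ≤ m) (h : ∀ i, m ≤ ∑ j, A i j) (k : ℕ) (i : n) : m ^ k ≤ ∑ j, (A ^ k) i j := by
  induction k generalizing i with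
  | zero => simp [one_apply]
  | succ k ih =>
    calc m ^ (k + 1) = m * m ^ k := pow_succ' m k
      _ ≤ (∑ l, A i l) * m ^ k := mul_le_mul_of_nonneg_right (h i) (pow_nonneg hm k)
      _ = ∑ l, A i l * m ^ k := sum_mul ..
      _ ≤ ∑ l, A i l * ∑ j, (A ^ k) l j :=
        sum_le_sum fun l _ => mul_le_mul_of_nonneg_left (ih l) (hA i l)
      _ = ∑ j, (A ^ (k + 1)) i j := by
        simp_rw [pow_succ' A k, mul_apply, mul_sum]
        exact sum_comm

theorem spectralRadius_map_ofReal_mul_comm {n : Type*} [Fintype n] [DecidableEq n]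
    (A B : Matrix n n ℝ) :
    spectralRadius ℂ ((A * B).map ((↑) : ℝ → ℂ)) = spectralRadius ℂ ((B * A).map ((↑) : ℝ → ℂ)) :=
  calc spectralRadius ℂ ((A * B).map ((↑) : ℝ → ℂ))
      = spectralRadius ℂ (A.map ((↑) : ℝ → ℂ) * B.map ((↑) : ℝ → ℂ)) :=
        congrArg _ (Matrix.map_mul (f := Complex.ofRealHom))
    _ = spectralRadius ℂ (B.map ((↑) : ℝ → ℂ) * A.map ((↑) : ℝ → ℂ)) :=
        spectrum.spectralRadius_mul_comm _ _
    _ = spectralRadius ℂ ((B * A).map ((↑) : ℝ → ℂ)) :=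
        congrArg _ (Matrix.map_mul (f := Complex.ofRealHom)).symm

section LinftyOpNorm

open scoped Norms.Operator

theorem sum_apply_le_linfty_opNorm {m n : Type*} [Fintype m] [Fintype n] (A : Matrix m n ℝ)
    (i : m) : ∑ j, A i j ≤ ‖A‖ := by
  rw [linfty_opNorm_def]
  calc ∑ j, A i j ≤ ∑ j, ‖A i j‖ := sum_le_sum fun j _ => Real.le_norm_self _
    _ = ((∑ j, ‖A i j‖₊ : ℝ≥0) : ℝ) := by push_cast; rfl
    _ ≤ _ := NNReal.coe_le_coe.2 (le_sup (f := fun i => ∑ j, ‖A i j‖₊) (mem_univ i))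

theorem linfty_opNNNorm_map_ofReal {m n : Type*} [Fintype m] [Fintype n] (A : Matrix m n ℝ) :
    ‖A.map ((↑) : ℝ → ℂ)‖₊ = ‖A‖₊ := by
  simp only [linfty_opNNNorm_def, map_apply, Complex.nnnorm_real]

variable {n : Type*} [Fintype n] [DecidableEq n] [Nonempty n] {A : Matrix n n ℝ}

theorem spectralRadius_map_ofReal_le (hA : ∀ i j, 0 ≤ A i j) {M : ℝ}
    (h : ∀ i, ∑ j, A i j ≤ M) : spectralRadius ℂ (A.map ((↑) : ℝ → ℂ)) ≤ ENNReal.ofReal M := by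
  have hrow (i : n) : ∑ j, ‖A i j‖₊ = (∑ j, A i j).toNNReal := by
    rw [Real.toNNReal_sum_of_nonneg fun j _ => hA i j]
    exact sum_congr rfl fun j _ => by
      rw [Real.nnnorm_of_nonneg (hA i j), Real.toNNReal_of_nonneg (hA i j)]
  calc spectralRadius ℂ (A.map ((↑) : ℝ → ℂ)) ≤ ‖A.map ((↑) : ℝ → ℂ)‖₊ :=
        spectrum.spectralRadius_le_nnnorm _
    _ = ‖A‖₊ := by rw [linfty_opNNNorm_map_ofReal]
    _ ≤ ENNReal.ofReal M := by
        rw [linfty_opNNNorm_def]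
        exact ENNReal.coe_le_coe.2 (Finset.sup_le fun i _ => hrow i ▸ Real.toNNReal_le_toNNReal (h i))

theorem ofReal_le_spectralRadius_map_ofReal (hA : ∀ i j, 0 ≤ A i j) {m : ℝ}
    (h : ∀ i, m ≤ ∑ j, A i j) : ENNReal.ofReal m ≤ spectralRadius ℂ (A.map ((↑) : ℝ → ℂ)) := by
  rcases le_or_gt m 0 with hm | hm
  · simp [ENNReal.ofReal_of_nonpos hm]
  refine spectrum.ofReal_le_spectralRadius_of_pow_le_norm hm.le fun k => ?_
  let i := Classical.arbitrary n
  calc m ^ k ≤ ∑ j, (A ^ k) i j := pow_le_sum_pow_apply hA hm.le h k i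
    _ ≤ ‖A ^ k‖ := sum_apply_le_linfty_opNorm _ i
    _ = ‖(A ^ k).map ((↑) : ℝ → ℂ)‖ := by
        rw [← coe_nnnorm, ← coe_nnnorm, linfty_opNNNorm_map_ofReal]
    _ = ‖A.map ((↑) : ℝ → ℂ) ^ k‖ := congrArg norm (A.map_pow Complex.ofRealHom k)

end LinftyOpNorm

end Matrix

theorem R0_bounds_homogeneous_case_general
    (n : ℕ) [NeZero n]
    (β γ : Fin n → ℝ) (hβ : ∀ i, 0 ≤ β i) (hγ : ∀ i, 0 ≤ γ i)
    (c d : ℝ) (hc : 0 < c)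
    (V22 : Matrix (Fin n) (Fin n) ℝ)
    (hV22 : IsUnit V22)
    (hV22inv : ∀ i j, 0 ≤ V22⁻¹ i j)
    (hcol : ∀ j, ∑ i, V22 i j = d) :
    ENNReal.ofReal (Finset.univ.inf' Finset.univ_nonempty
        (fun i => β i * γ i / (c * d))) ≤
      spectralRadius ℂ
        ((Matrix.diagonal β * V22⁻¹ * Matrix.diagonal γ *
            (c • (1 : Matrix (Fin n) (Fin n) ℝ))⁻¹).map (fun x => (x : ℂ))) ∧
    spectralRadius ℂ
        ((Matrix.diagonal β * V22⁻¹ * Matrix.diagonal γ *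
            (c • (1 : Matrix (Fin n) (Fin n) ℝ))⁻¹).map (fun x => (x : ℂ))) ≤
      ENNReal.ofReal (Finset.univ.sup' Finset.univ_nonempty
        (fun i => β i * γ i / (c * d))) := by
  set w : Fin n → ℝ := fun i => β i * γ i / c
  set B := (V22⁻¹ * diagonal w)ᵀ
  have hB_nonneg (i j) : 0 ≤ B i j := by
    simp only [B, transpose_apply, mul_diagonal]
    exact mul_nonneg (hV22inv j i) (div_nonneg (mul_nonneg (hβ i) (hγ i)) hc.le)
  have hB_sum (i) : ∑ j, B i j = β i * γ i / (c * d) := by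
    simp only [B, transpose_apply, mul_diagonal, ← sum_mul, sum_inv_apply_eq_inv hV22 hcol, w]
    ring
  have hc_inv : (c • (1 : Matrix (Fin n) (Fin n) ℝ))⁻¹ = c⁻¹ • 1 :=
    inv_eq_left_inv (by rw [smul_mul_smul_comm, one_mul, inv_mul_cancel₀ hc.ne', one_smul])
  have hswap : V22⁻¹ * diagonal γ * (c • 1)⁻¹ * diagonal β = V22⁻¹ * diagonal w := by
    ext i j
    simp only [hc_inv, Algebra.mul_smul_comm, mul_one, mul_diagonal, Matrix.smul_apply,
      smul_eq_mul, w]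
    ring
  have hρ : spectralRadius ℂ ((diagonal β * V22⁻¹ * diagonal γ * (c • 1)⁻¹).map ((↑) : ℝ → ℂ)) =
      spectralRadius ℂ (B.map ((↑) : ℝ → ℂ)) := by
    rw [mul_assoc, mul_assoc, spectralRadius_map_ofReal_mul_comm, ← mul_assoc, hswap,
      transpose_map, spectralRadius_transpose]
  rw [hρ]
  exact ⟨ofReal_le_spectralRadius_map_ofReal hB_nonneg fun i =>
      (inf'_le _ (mem_univ i)).trans_eq (hB_sum i).symm,
    spectralRadius_map_ofReal_le hB_nonneg fun i => (hB_sum i).trans_le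
      (le_sup' (fun i => β i * γ i / (c * d)) (mem_univ i))⟩

/-- **Bounds on `R₀` in the homogeneous case.**
With `F₁₁ = diag(β_i)`, `V₂₁ = diag(γ_i)`, `V₁₁ = c·I` (`c = γ+μ > 0`) and `V₂₂` a
Z-matrix that is invertible with entrywise nonnegative inverse and all column sums
equal to `d = σ+μ+δ > 0`, the basic reproduction number
`R₀ = ρ(F₁₁ V₂₂⁻¹ V₂₁ V₁₁⁻¹)` satisfies
`min_i β_i γ_i/(c d) ≤ R₀ ≤ max_i β_i γ_i/(c d)`. -/
theorem R0_bounds_homogeneous_case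
    (n : ℕ) [NeZero n]
    (β γ : Fin n → ℝ) (hβ : ∀ i, 0 ≤ β i) (hγ : ∀ i, 0 ≤ γ i)
    (c d : ℝ) (hc : 0 < c) (hd : 0 < d)
    (V22 : Matrix (Fin n) (Fin n) ℝ)
    (hZ : ∀ i j, i ≠ j → V22 i j ≤ 0)
    (hV22 : IsUnit V22)
    (hV22inv : ∀ i j, 0 ≤ V22⁻¹ i j)
    (hcol : ∀ j, ∑ i, V22 i j = d) :
    ENNReal.ofReal (Finset.univ.inf' Finset.univ_nonempty
        (fun i => β i * γ i / (c * d))) ≤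
      spectralRadius ℂ
        ((Matrix.diagonal β * V22⁻¹ * Matrix.diagonal γ *
            (c • (1 : Matrix (Fin n) (Fin n) ℝ))⁻¹).map (fun x => (x : ℂ))) ∧
    spectralRadius ℂ
        ((Matrix.diagonal β * V22⁻¹ * Matrix.diagonal γ *
            (c • (1 : Matrix (Fin n) (Fin n) ℝ))⁻¹).map (fun x => (x : ℂ))) ≤
      ENNReal.ofReal (Finset.univ.sup' Finset.univ_nonempty
        (fun i => β i * γ i / (c * d))) :=
  R0_bounds_homogeneous_case_general n β γ hβ hγ c d hc V22 hV22 hV22inv hcol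
end

section
/- Lyapunov derivative estimate: let F and V be m × m real matrices with V invertible, let R₀ ∈ ℝ and b ∈ ℝ^m satisfy b^T V^{-1} F = R₀ b^T with b entrywise nonnegative, and suppose the row vector b^T V^{-1} is entrywise nonnegative. If x : ℝ → ℝ^m is differentiable and satisfies the componentwise differential inequality x'(t) ≤ (F − V) x(t) for all t, then the function L(t) = b^T V^{-1} x(t) satisfies L'(t) ≤ (R₀ − 1) b^T x(t) for all t. In particular, if R₀ < 1 and x(t) is entrywise nonnegative, then L'(t) ≤ 0. -/
/-!
Differentiating `L = bᵀV⁻¹x` gives `bᵀV⁻¹x'`. Since `bᵀV⁻¹ ≥ 0`, the inequality `x' ≤ (F − V)x`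
survives multiplication by it, and `bᵀV⁻¹(F − V) = R₀bᵀ − bᵀ` by the eigenvector equation.
-/

open Matrix

section

variable {n : Type*} [Fintype n]

theorem HasDerivAt.const_dotProduct {𝕜 : Type*} [NontriviallyNormedField 𝕜] (w : n → 𝕜)
    {x : 𝕜 → n → 𝕜} {x' : n → 𝕜} {t : 𝕜} (hx : ∀ i, HasDerivAt (fun τ => x τ i) (x' i) t) :
    HasDerivAt (fun τ => w ⬝ᵥ x τ) (w ⬝ᵥ x') t :=
  HasDerivAt.fun_sum fun i _ => (hx i).const_mul (w i)

theorem vecMul_inv_dotProduct_sub_mulVec {R : Type*} [CommRing R] [DecidableEq n]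
    {F V : Matrix n n R} (hV : IsUnit V) {r : R} {b : n → R} (heig : b ᵥ* (V⁻¹ * F) = r • b)
    (y : n → R) : (b ᵥ* V⁻¹) ⬝ᵥ ((F - V) *ᵥ y) = (r - 1) * (b ⬝ᵥ y) := by
  rw [dotProduct_mulVec, vecMul_sub, vecMul_vecMul, vecMul_vecMul, heig,
    nonsing_inv_mul V ((isUnit_iff_isUnit_det V).mp hV), vecMul_one, sub_dotProduct,
    smul_dotProduct, smul_eq_mul, sub_mul, one_mul]

theorem vecMul_inv_dotProduct_le_of_le_sub_mulVec {R : Type*} [CommRing R] [PartialOrder R]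
    [IsOrderedRing R] [DecidableEq n] {F V : Matrix n n R} (hV : IsUnit V) {r : R}
    {b : n → R} (heig : b ᵥ* (V⁻¹ * F) = r • b) (hbV : 0 ≤ b ᵥ* V⁻¹) {y y' : n → R}
    (hle : y' ≤ (F - V) *ᵥ y) : (b ᵥ* V⁻¹) ⬝ᵥ y' ≤ (r - 1) * (b ⬝ᵥ y) :=
  vecMul_inv_dotProduct_sub_mulVec hV heig y ▸ dotProduct_le_dotProduct_of_nonneg_left hle hbV

end

theorem lyapunov_derivative_estimate_general
    (m : ℕ)
    (F V : Matrix (Fin m) (Fin m) ℝ) (hV : IsUnit V)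
    (R₀ : ℝ) (b : Fin m → ℝ) (hb : ∀ i, 0 ≤ b i)
    (heig : b ᵥ* (V⁻¹ * F) = R₀ • b)
    (hbV : ∀ i, 0 ≤ (b ᵥ* V⁻¹) i)
    (x x' : ℝ → Fin m → ℝ)
    (hx : ∀ t i, HasDerivAt (fun τ => x τ i) (x' t i) t)
    (hineq : ∀ t i, x' t i ≤ ((F - V) *ᵥ x t) i) :
    ∀ t : ℝ,
      HasDerivAt (fun τ => (b ᵥ* V⁻¹) ⬝ᵥ x τ) ((b ᵥ* V⁻¹) ⬝ᵥ x' t) t ∧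
      (b ᵥ* V⁻¹) ⬝ᵥ x' t ≤ (R₀ - 1) * (b ⬝ᵥ x t) ∧
      (R₀ < 1 → (∀ i, 0 ≤ x t i) → (b ᵥ* V⁻¹) ⬝ᵥ x' t ≤ 0) := by
  intro t
  have hL' : (b ᵥ* V⁻¹) ⬝ᵥ x' t ≤ (R₀ - 1) * (b ⬝ᵥ x t) :=
    vecMul_inv_dotProduct_le_of_le_sub_mulVec hV heig hbV (hineq t)
  refine ⟨HasDerivAt.const_dotProduct _ (hx t), hL', fun hR hx₀ => ?_⟩
  have hbx : 0 ≤ b ⬝ᵥ x t := dotProduct_nonneg_of_nonneg hb hx₀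
  exact hL'.trans (mul_nonpos_of_nonpos_of_nonneg (by linarith) hbx)

/-- **Lyapunov derivative estimate.**
Let `b` be an entrywise nonnegative left eigenvector of `V⁻¹F` for the eigenvalue `R₀`
with `bᵀV⁻¹` entrywise nonnegative. If `x` satisfies the componentwise differential
inequality `x' ≤ (F − V) x`, then `L = bᵀV⁻¹x` satisfies `L' ≤ (R₀ − 1) bᵀx`; in
particular `L' ≤ 0` whenever `R₀ < 1` and `x(t)` is entrywise nonnegative. -/
theorem lyapunov_derivative_estimate
    (m : ℕ) [NeZero m]
    (F V : Matrix (Fin m) (Fin m) ℝ) (hV : IsUnit V)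
    (R₀ : ℝ) (b : Fin m → ℝ) (hb : ∀ i, 0 ≤ b i)
    (heig : b ᵥ* (V⁻¹ * F) = R₀ • b)
    (hbV : ∀ i, 0 ≤ (b ᵥ* V⁻¹) i)
    (x x' : ℝ → Fin m → ℝ)
    (hx : ∀ t i, HasDerivAt (fun τ => x τ i) (x' t i) t)
    (hineq : ∀ t i, x' t i ≤ ((F - V) *ᵥ x t) i) :
    ∀ t : ℝ,
      HasDerivAt (fun τ => (b ᵥ* V⁻¹) ⬝ᵥ x τ) ((b ᵥ* V⁻¹) ⬝ᵥ x' t) t ∧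
      (b ᵥ* V⁻¹) ⬝ᵥ x' t ≤ (R₀ - 1) * (b ⬝ᵥ x t) ∧
      (R₀ < 1 → (∀ i, 0 ≤ x t i) → (b ᵥ* V⁻¹) ⬝ᵥ x' t ≤ 0) :=
  lyapunov_derivative_estimate_general m F V hV R₀ b hb heig hbV x x' hx hineq
end
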